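/- No-distillation of incompatibility: for any measurement assemblage {A_{a|x}}, any positive trace-nonincreasing linear map E (a filter), and any bipartite density matrix ρ_AB with p = tr[(E⊗id)(ρ_AB)] > 0, the steerability of the filtered assemblage is bounded by the incompatibility of the original measurements: SR( {tr_A[(A_{a|x}⊗I)(E⊗id)(ρ_AB)]/p} ) ≤ IR(A). -/

import Mathlib

open Matrix Kronecker BigOperators ComplexOrder

noncomputable section

/-- A density matrix: positive semidefinite with unit trace. -/
def IsDensity {d : ℕ} (ρ : Matrix (Fin d) (Fin d) ℂ) : Prop :=
  ρ.PosSemidef ∧ ρ.trace = 1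

/-- A POVM: positive semidefinite effects summing to the identity. -/
def IsPOVM {d nl : ℕ} (G : Fin nl → Matrix (Fin d) (Fin d) ℂ) : Prop :=
  (∀ l, (G l).PosSemidef) ∧ ∑ l, G l = 1

/-- A measurement assemblage: for each setting `x`, a POVM `a ↦ M x a`. -/
def IsMA {d na nx : ℕ} (M : Fin nx → Fin na → Matrix (Fin d) (Fin d) ℂ) : Prop :=
  (∀ x a, (M x a).PosSemidef) ∧ ∀ x, ∑ a, M x a = 1

/-- Joint measurability: `M x a = ∑ λ p(a|x,λ) G λ` for a parent POVM `G`. -/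
def JM {d na nx : ℕ} (M : Fin nx → Fin na → Matrix (Fin d) (Fin d) ℂ) : Prop :=
  ∃ (nl : ℕ) (G : Fin nl → Matrix (Fin d) (Fin d) ℂ)
    (p : Fin nx → Fin na → Fin nl → ℝ),
    IsPOVM G ∧ (∀ x a l, 0 ≤ p x a l) ∧ (∀ x l, ∑ a, p x a l = 1) ∧
    ∀ x a, M x a = ∑ l, (p x a l : ℂ) • G l

/-- A state assemblage: PSD elements with an `x`-independent reduced density matrix. -/
def IsSA {d na nx : ℕ} (σ : Fin nx → Fin na → Matrix (Fin d) (Fin d) ℂ) : Prop :=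
  (∀ x a, (σ x a).PosSemidef) ∧
  ∃ ρ : Matrix (Fin d) (Fin d) ℂ, IsDensity ρ ∧ ∀ x, ∑ a, σ x a = ρ

/-- Local-hidden-state model: `σ x a = ∑ λ q(λ) p(a|x,λ) ρ_λ`. -/
def LHS {d na nx : ℕ} (σ : Fin nx → Fin na → Matrix (Fin d) (Fin d) ℂ) : Prop :=
  ∃ (nl : ℕ) (q : Fin nl → ℝ) (p : Fin nx → Fin na → Fin nl → ℝ)
    (ρ : Fin nl → Matrix (Fin d) (Fin d) ℂ),
    (∀ l, 0 ≤ q l) ∧ (∑ l, q l = 1) ∧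
    (∀ x a l, 0 ≤ p x a l) ∧ (∀ x l, ∑ a, p x a l = 1) ∧
    (∀ l, IsDensity (ρ l)) ∧
    ∀ x a, σ x a = ∑ l, ((q l * p x a l : ℝ) : ℂ) • ρ l

/-- Incompatibility robustness. -/
def IR {d na nx : ℕ} (B : Fin nx → Fin na → Matrix (Fin d) (Fin d) ℂ) : ℝ :=
  sInf {t : ℝ | 0 ≤ t ∧ ∃ N, IsMA N ∧
    JM (fun x a => (((1 + t : ℝ))⁻¹ : ℂ) • (B x a + (t : ℂ) • N x a))}

/-- Steering robustness. -/
def SR {d na nx : ℕ} (σ : Fin nx → Fin na → Matrix (Fin d) (Fin d) ℂ) : ℝ :=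
  sInf {t : ℝ | 0 ≤ t ∧ ∃ ξ, IsSA ξ ∧
    LHS (fun x a => (((1 + t : ℝ))⁻¹ : ℂ) • (σ x a + (t : ℂ) • ξ x a))}

/-- Incompatible weight. -/
def IW {d na nx : ℕ} (B : Fin nx → Fin na → Matrix (Fin d) (Fin d) ℂ) : ℝ :=
  sInf {t : ℝ | 0 ≤ t ∧ t ≤ 1 ∧ ∃ N O, IsMA N ∧ JM O ∧
    ∀ x a, B x a = (t : ℂ) • N x a + ((1 - t : ℝ) : ℂ) • O x a}

/-- Steerable weight. -/
def SW {d na nx : ℕ} (σ : Fin nx → Fin na → Matrix (Fin d) (Fin d) ℂ) : ℝ :=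
  sInf {t : ℝ | 0 ≤ t ∧ t ≤ 1 ∧ ∃ ξ τ, IsSA ξ ∧ LHS τ ∧
    ∀ x a, σ x a = (t : ℂ) • ξ x a + ((1 - t : ℝ) : ℂ) • τ x a}

/-- Positive map on matrices. -/
def PosMap {d : ℕ} (E : Matrix (Fin d) (Fin d) ℂ →ₗ[ℂ] Matrix (Fin d) (Fin d) ℂ) : Prop :=
  ∀ X, X.PosSemidef → (E X).PosSemidef

/-- Trace-nonincreasing on PSD matrices. -/
def TNI {d : ℕ} (E : Matrix (Fin d) (Fin d) ℂ →ₗ[ℂ] Matrix (Fin d) (Fin d) ℂ) : Prop :=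
  ∀ X : Matrix (Fin d) (Fin d) ℂ, X.PosSemidef → (E X).trace.re ≤ X.trace.re

/-- `Ed` is the Hilbert–Schmidt adjoint of `E`. -/
def IsAdjoint {d : ℕ} (E Ed : Matrix (Fin d) (Fin d) ℂ →ₗ[ℂ] Matrix (Fin d) (Fin d) ℂ) : Prop :=
  ∀ X Y, ((E X)ᴴ * Y).trace = (Xᴴ * (Ed Y)).trace

/-- Partial trace over the first tensor factor. -/
def ptraceA {d d' : ℕ} (M : Matrix (Fin d × Fin d') (Fin d × Fin d') ℂ) :
    Matrix (Fin d') (Fin d') ℂ :=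
  Matrix.of fun i j => ∑ k : Fin d, M (k, i) (k, j)

/-- The map `E ⊗ id` acting on bipartite matrices. -/
def tensId {d d' : ℕ} (E : Matrix (Fin d) (Fin d) ℂ →ₗ[ℂ] Matrix (Fin d) (Fin d) ℂ)
    (M : Matrix (Fin d × Fin d') (Fin d × Fin d') ℂ) :
    Matrix (Fin d × Fin d') (Fin d × Fin d') ℂ :=
  Matrix.of fun p q => E (Matrix.of fun i k => M (i, p.2) (k, q.2)) p.1 q.1

/-!
Let `Φ(X) = tr_A[(X ⊗ I)(E ⊗ id)(ρ_AB)]`. Since `E` is only positive, `(E ⊗ id)(ρ_AB)` need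
not be a state, but `Φ` is still a positive linear map:
`⟨v|Φ(X)|v⟩ = tr[X E((I ⊗ ⟨v|) ρ_AB (I ⊗ |v⟩))]`. After normalising by `p = tr Φ(I)`, any such
map sends measurement assemblages to state assemblages and jointly measurable ones (parent
POVM `G`) to LHS models (hidden states `Φ(G_λ) / tr Φ(G_λ)`), and it commutes with the noise
mixing in the robustness. Hence every feasible value for `IR(A)` is feasible for the steering
robustness of the filtered assemblage.
-/

namespace Matrix

variable {n : Type*} [Fintype n]

theorem posSemidef_of_forall_dotProduct_mulVec_nonneg {A : Matrix n n ℂ}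
    (h : ∀ x, 0 ≤ star x ⬝ᵥ A *ᵥ x) : A.PosSemidef := by
  classical
  rw [← isPositive_toEuclideanLin_iff, LinearMap.isPositive_iff_complex]
  intro x
  have hx : 0 ≤ x.ofLp ⬝ᵥ star (A *ᵥ x.ofLp) := by
    rw [dotProduct_star, dotProduct_comm]
    exact star_nonneg_iff.mpr (h x.ofLp)
  simp only [EuclideanSpace.inner_eq_star_dotProduct, toLpLin_apply]
  exact ⟨(Complex.eq_re_of_ofReal_le (r := 0) (by rwa [Complex.ofReal_zero])).symm,
    (Complex.nonneg_iff.mp hx).1⟩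

theorem PosSemidef.trace_mul_nonneg {A B : Matrix n n ℂ} (hA : A.PosSemidef)
    (hB : B.PosSemidef) : 0 ≤ (A * B).trace := by
  classical
  obtain ⟨C, rfl⟩ : ∃ C : Matrix n n ℂ, B = Cᴴ * C := by
    open scoped MatrixOrder in
    exact CStarAlgebra.nonneg_iff_eq_star_mul_self.mp hB.nonneg
  rw [← Matrix.mul_assoc, trace_mul_cycle]
  exact (hA.mul_mul_conjTranspose_same C).trace_nonneg

theorem IsHermitian.ofReal_re_trace {A : Matrix n n ℂ} (hA : A.IsHermitian) :
    ((A.trace.re : ℝ) : ℂ) = A.trace := by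
  simp only [trace, Complex.re_sum, Complex.ofReal_sum]
  exact Finset.sum_congr rfl fun i _ => hA.coe_re_apply_self i

theorem PosSemidef.exists_isDensity_smul_eq {d : ℕ} {M ρ₀ : Matrix (Fin d) (Fin d) ℂ}
    (hM : M.PosSemidef) (hρ₀ : IsDensity ρ₀) :
    ∃ ρ, IsDensity ρ ∧ M = ((M.trace.re : ℝ) : ℂ) • ρ := by
  set r := M.trace.re
  have hr : (r : ℂ) = M.trace := hM.isHermitian.ofReal_re_trace
  by_cases hr0 : r = 0
  · refine ⟨ρ₀, hρ₀, ?_⟩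
    rw [hr0, Complex.ofReal_zero, zero_smul, ← hM.trace_eq_zero_iff, ← hr, hr0,
      Complex.ofReal_zero]
  · refine ⟨((r⁻¹ : ℝ) : ℂ) • M, ⟨hM.smul ?_, ?_⟩, ?_⟩
    · exact Complex.zero_le_real.mpr (inv_nonneg.mpr (Complex.nonneg_iff.mp hM.trace_nonneg).1)
    · rw [trace_smul, ← hr, smul_eq_mul, ← Complex.ofReal_mul, inv_mul_cancel₀ hr0,
        Complex.ofReal_one]
    · rw [smul_smul, ← Complex.ofReal_mul, mul_inv_cancel₀ hr0, Complex.ofReal_one, one_smul]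

end Matrix

def irSet {d na nx : ℕ} (B : Fin nx → Fin na → Matrix (Fin d) (Fin d) ℂ) : Set ℝ :=
  {t : ℝ | 0 ≤ t ∧ ∃ N, IsMA N ∧
    JM (fun x a => (((1 + t : ℝ))⁻¹ : ℂ) • (B x a + (t : ℂ) • N x a))}

def srSet {d na nx : ℕ} (σ : Fin nx → Fin na → Matrix (Fin d) (Fin d) ℂ) : Set ℝ :=
  {t : ℝ | 0 ≤ t ∧ ∃ ξ, IsSA ξ ∧
    LHS (fun x a => (((1 + t : ℝ))⁻¹ : ℂ) • (σ x a + (t : ℂ) • ξ x a))}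

section Assemblage

variable {d d' na nx : ℕ}

theorem IsMA.pos_of_nonempty [Nonempty (Fin d)] {A : Fin nx → Fin na → Matrix (Fin d) (Fin d) ℂ}
    (hA : IsMA A) (x : Fin nx) : 0 < na := by
  refine Nat.pos_of_ne_zero fun h => ?_
  subst h
  simpa using (hA.2 x).symm

theorem IsMA.posSemidef_one_sub {A : Fin nx → Fin na → Matrix (Fin d) (Fin d) ℂ}
    (hA : IsMA A) (x : Fin nx) (a : Fin na) : (1 - A x a).PosSemidef := by
  rw [← hA.2 x, ← Finset.add_sum_erase _ _ (Finset.mem_univ a), add_sub_cancel_left]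
  exact posSemidef_sum _ fun b _ => hA.1 x b

/-- The noise `N` is chosen so that `(A + na • N) / (1 + na)` is the trivial measurement
`a ↦ I / na`. -/
theorem IsMA.natCast_mem_irSet [Nonempty (Fin d)]
    {A : Fin nx → Fin na → Matrix (Fin d) (Fin d) ℂ} (hA : IsMA A) : (na : ℝ) ∈ irSet A := by
  have hc : (0 : ℂ) ≤ (na : ℂ)⁻¹ := by simp
  refine ⟨na.cast_nonneg, fun x a => (na : ℂ)⁻¹ • (1 - A x a + (na : ℂ)⁻¹ • 1),
    ⟨fun x a => ?_, fun x => ?_⟩, 1, fun _ => 1, fun _ _ _ => (na : ℝ)⁻¹,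
    ⟨fun _ => PosSemidef.one, by simp⟩, fun _ _ _ => by positivity, fun x _ => ?_, fun x a => ?_⟩
  · exact ((hA.posSemidef_one_sub x a).add (PosSemidef.one.smul hc)).smul hc
  · have hna : (na : ℂ) ≠ 0 := Nat.cast_ne_zero.mpr (hA.pos_of_nonempty x).ne'
    simp only [← Finset.smul_sum, Finset.sum_add_distrib, Finset.sum_sub_distrib, hA.2 x,
      Finset.sum_const, Finset.card_univ, Fintype.card_fin, ← Nat.cast_smul_eq_nsmul ℂ]
    match_scalars
    field_simp
    ring
  · have hna : (na : ℝ) ≠ 0 := Nat.cast_ne_zero.mpr (hA.pos_of_nonempty x).ne'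
    simp [hna]
  · have hna : (na : ℂ) ≠ 0 := Nat.cast_ne_zero.mpr (Fin.pos a).ne'
    have h1na : (1 + na : ℂ) ≠ 0 := by norm_cast; omega
    simp only [Fin.sum_univ_one]
    match_scalars <;> field_simp <;> ring

theorem IsMA.isSA_map {Ψ : Matrix (Fin d) (Fin d) ℂ →ₗ[ℂ] Matrix (Fin d') (Fin d') ℂ}
    (hΨ : ∀ X, X.PosSemidef → (Ψ X).PosSemidef) (hΨ1 : (Ψ 1).trace = 1)
    {N : Fin nx → Fin na → Matrix (Fin d) (Fin d) ℂ} (hN : IsMA N) :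
    IsSA (fun x a => Ψ (N x a)) :=
  ⟨fun x a => hΨ _ (hN.1 x a), Ψ 1, ⟨hΨ 1 PosSemidef.one, hΨ1⟩,
    fun x => by rw [← map_sum, hN.2 x]⟩

theorem JM.lhs_map {Ψ : Matrix (Fin d) (Fin d) ℂ →ₗ[ℂ] Matrix (Fin d') (Fin d') ℂ}
    (hΨ : ∀ X, X.PosSemidef → (Ψ X).PosSemidef) (hΨ1 : (Ψ 1).trace = 1)
    {M : Fin nx → Fin na → Matrix (Fin d) (Fin d) ℂ} (hM : JM M) :
    LHS (fun x a => Ψ (M x a)) := by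
  obtain ⟨nl, G, p, ⟨hG, hG1⟩, hp0, hp1, hMG⟩ := hM
  choose ρ hρ hGρ using fun l =>
    (hΨ _ (hG l)).exists_isDensity_smul_eq ⟨hΨ 1 PosSemidef.one, hΨ1⟩
  refine ⟨nl, fun l => (Ψ (G l)).trace.re, p, ρ, fun l => ?_, ?_, hp0, hp1, hρ, fun x a => ?_⟩
  · exact (Complex.nonneg_iff.mp (hΨ _ (hG l)).trace_nonneg).1
  · rw [← Complex.re_sum, ← trace_sum, ← map_sum, hG1, hΨ1, Complex.one_re]
  · simp_rw [hMG, map_sum, map_smul]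
    refine Finset.sum_congr rfl fun l _ => ?_
    conv_lhs => rw [hGρ l]
    rw [smul_smul, Complex.ofReal_mul, mul_comm]

theorem irSet_subset_srSet_map {Ψ : Matrix (Fin d) (Fin d) ℂ →ₗ[ℂ] Matrix (Fin d') (Fin d') ℂ}
    (hΨ : ∀ X, X.PosSemidef → (Ψ X).PosSemidef) (hΨ1 : (Ψ 1).trace = 1)
    (A : Fin nx → Fin na → Matrix (Fin d) (Fin d) ℂ) :
    irSet A ⊆ srSet (fun x a => Ψ (A x a)) := by
  rintro t ⟨ht, N, hN, hJM⟩
  refine ⟨ht, _, hN.isSA_map hΨ hΨ1, ?_⟩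
  simpa only [map_smul, map_add] using hJM.lhs_map hΨ hΨ1

theorem SR_map_le_IR [Nonempty (Fin d)]
    {Ψ : Matrix (Fin d) (Fin d) ℂ →ₗ[ℂ] Matrix (Fin d') (Fin d') ℂ}
    (hΨ : ∀ X, X.PosSemidef → (Ψ X).PosSemidef) (hΨ1 : (Ψ 1).trace = 1)
    {A : Fin nx → Fin na → Matrix (Fin d) (Fin d) ℂ} (hA : IsMA A) :
    SR (fun x a => Ψ (A x a)) ≤ IR A :=
  csInf_le_csInf ⟨0, fun _ ht => ht.1⟩ ⟨_, hA.natCast_mem_irSet⟩ (irSet_subset_srSet_map hΨ hΨ1 A)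

end Assemblage

section Filter

variable {d d' : ℕ}

def steeringMap (E : Matrix (Fin d) (Fin d) ℂ →ₗ[ℂ] Matrix (Fin d) (Fin d) ℂ)
    (ρAB : Matrix (Fin d × Fin d') (Fin d × Fin d') ℂ) :
    Matrix (Fin d) (Fin d) ℂ →ₗ[ℂ] Matrix (Fin d') (Fin d') ℂ where
  toFun X := ptraceA ((X ⊗ₖ (1 : Matrix (Fin d') (Fin d') ℂ)) * tensId E ρAB)
  map_add' X Y := by ext; simp [ptraceA, add_kronecker, add_mul, Finset.sum_add_distrib]
  map_smul' c X := by ext; simp [ptraceA, smul_kronecker, Finset.mul_sum]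

theorem steeringMap_apply_apply (E : Matrix (Fin d) (Fin d) ℂ →ₗ[ℂ] Matrix (Fin d) (Fin d) ℂ)
    (ρAB : Matrix (Fin d × Fin d') (Fin d × Fin d') ℂ) (X : Matrix (Fin d) (Fin d) ℂ)
    (i j : Fin d') :
    steeringMap E ρAB X i j = (X * E (Matrix.of fun a b => ρAB (a, i) (b, j))).trace := by
  simp [steeringMap, ptraceA, tensId, Matrix.mul_apply, Fintype.sum_prod_type, one_apply, trace]

theorem trace_steeringMap_one (E : Matrix (Fin d) (Fin d) ℂ →ₗ[ℂ] Matrix (Fin d) (Fin d) ℂ)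
    (ρAB : Matrix (Fin d × Fin d') (Fin d × Fin d') ℂ) :
    (steeringMap E ρAB 1).trace = (tensId E ρAB).trace := by
  simp only [steeringMap, LinearMap.coe_mk, AddHom.coe_mk, one_kronecker_one, Matrix.one_mul,
    ptraceA, trace, diag_apply, of_apply, Fintype.sum_prod_type]
  exact Finset.sum_comm

/-- `(I ⊗ ⟨v|) ρAB (I ⊗ |v⟩)`. -/
def compressSnd (ρAB : Matrix (Fin d × Fin d') (Fin d × Fin d') ℂ) (v : Fin d' → ℂ) :
    Matrix (Fin d) (Fin d) ℂ :=
  let B := ((1 : Matrix (Fin d) (Fin d) ℂ) ⊗ₖ replicateCol Unit v).submatrix id fun m => (m, ())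
  Bᴴ * ρAB * B

theorem compressSnd_posSemidef {ρAB : Matrix (Fin d × Fin d') (Fin d × Fin d') ℂ}
    (hρ : ρAB.PosSemidef) (v : Fin d' → ℂ) : (compressSnd ρAB v).PosSemidef :=
  hρ.conjTranspose_mul_mul_same _

theorem compressSnd_eq_sum (ρAB : Matrix (Fin d × Fin d') (Fin d × Fin d') ℂ) (v : Fin d' → ℂ) :
    compressSnd ρAB v =
      ∑ i, ∑ j, (star (v i) * v j) • Matrix.of fun a b => ρAB (a, i) (b, j) := by
  ext a b
  simp only [compressSnd, conjTranspose_submatrix, Matrix.mul_apply, submatrix_apply, id_eq,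
    conjTranspose_apply, kroneckerMap_apply, one_apply, replicateCol_apply, ite_mul, one_mul,
    zero_mul, mul_ite, mul_zero, apply_ite star, RCLike.star_def, star_zero,
    Fintype.sum_prod_type, Finset.sum_ite_irrel, Finset.sum_const_zero, Finset.sum_ite_eq',
    Finset.mem_univ, if_true, smul_of, Matrix.sum_apply, of_apply, Pi.smul_apply, smul_eq_mul,
    Finset.sum_mul]
  rw [Finset.sum_comm]
  exact Finset.sum_congr rfl fun i _ => Finset.sum_congr rfl fun j _ => by ring

theorem star_dotProduct_steeringMap_mulVec
    (E : Matrix (Fin d) (Fin d) ℂ →ₗ[ℂ] Matrix (Fin d) (Fin d) ℂ)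
    (ρAB : Matrix (Fin d × Fin d') (Fin d × Fin d') ℂ) (X : Matrix (Fin d) (Fin d) ℂ)
    (v : Fin d' → ℂ) :
    star v ⬝ᵥ steeringMap E ρAB X *ᵥ v = (X * E (compressSnd ρAB v)).trace := by
  simp only [compressSnd_eq_sum, map_sum, map_smul, Matrix.mul_smul, trace_sum, trace_smul,
    ← steeringMap_apply_apply, dotProduct, mulVec, Finset.mul_sum, smul_eq_mul, Pi.star_apply]
  exact Finset.sum_congr rfl fun i _ => Finset.sum_congr rfl fun j _ => by ring

theorem steeringMap_posSemidef {E : Matrix (Fin d) (Fin d) ℂ →ₗ[ℂ] Matrix (Fin d) (Fin d) ℂ}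
    (hE : PosMap E) {ρAB : Matrix (Fin d × Fin d') (Fin d × Fin d') ℂ} (hρ : ρAB.PosSemidef)
    {X : Matrix (Fin d) (Fin d) ℂ} (hX : X.PosSemidef) : (steeringMap E ρAB X).PosSemidef :=
  posSemidef_of_forall_dotProduct_mulVec_nonneg fun v => by
    rw [star_dotProduct_steeringMap_mulVec]
    exact hX.trace_mul_nonneg (hE _ (compressSnd_posSemidef hρ v))

end Filter

theorem no_distillation_incompatibility_general {d d' na nx : ℕ}
    (A : Fin nx → Fin na → Matrix (Fin d) (Fin d) ℂ) (hA : IsMA A)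
    (E : Matrix (Fin d) (Fin d) ℂ →ₗ[ℂ] Matrix (Fin d) (Fin d) ℂ)
    (hE : PosMap E)
    (ρAB : Matrix (Fin d × Fin d') (Fin d × Fin d') ℂ)
    (hρ : ρAB.PosSemidef)
    (hp : 0 < (tensId E ρAB).trace.re) :
    SR (fun x a => ((((tensId E ρAB).trace.re)⁻¹ : ℝ) : ℂ) •
        ptraceA ((A x a ⊗ₖ (1 : Matrix (Fin d') (Fin d') ℂ)) * tensId E ρAB)) ≤ IR A := by
  set p := (tensId E ρAB).trace.re
  have : Nonempty (Fin d) := by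
    by_contra h
    rw [not_nonempty_iff] at h
    simp [p, trace] at hp
  have hpos : ∀ X, X.PosSemidef → (steeringMap E ρAB X).PosSemidef :=
    fun _ => steeringMap_posSemidef hE hρ
  have hp_trace : ((p : ℝ) : ℂ) = (steeringMap E ρAB 1).trace := by
    rw [← (hpos 1 PosSemidef.one).isHermitian.ofReal_re_trace, trace_steeringMap_one]
  have hpinv : (0 : ℂ) ≤ ((p⁻¹ : ℝ) : ℂ) := Complex.zero_le_real.mpr (inv_nonneg.mpr hp.le)
  refine SR_map_le_IR (Ψ := ((p⁻¹ : ℝ) : ℂ) • steeringMap E ρAB)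
    (fun X hX => (hpos X hX).smul hpinv) ?_ hA
  rw [LinearMap.smul_apply, trace_smul, ← hp_trace, smul_eq_mul, ← Complex.ofReal_mul,
    inv_mul_cancel₀ hp.ne', Complex.ofReal_one]

/-- no stochastic distillation of incompatibility: the steerability of
the locally filtered assemblage is bounded by the incompatibility of the measurements. -/
theorem no_distillation_incompatibility {d d' na nx : ℕ}
    (A : Fin nx → Fin na → Matrix (Fin d) (Fin d) ℂ) (hA : IsMA A)
    (E : Matrix (Fin d) (Fin d) ℂ →ₗ[ℂ] Matrix (Fin d) (Fin d) ℂ)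
    (hE : PosMap E) (hTNI : TNI E)
    (ρAB : Matrix (Fin d × Fin d') (Fin d × Fin d') ℂ)
    (hρ : ρAB.PosSemidef) (hρ1 : ρAB.trace = 1)
    (hp : 0 < (tensId E ρAB).trace.re) :
    SR (fun x a => ((((tensId E ρAB).trace.re)⁻¹ : ℝ) : ℂ) •
        ptraceA ((A x a ⊗ₖ (1 : Matrix (Fin d') (Fin d') ℂ)) * tensId E ρAB)) ≤ IR A :=
  no_distillation_incompatibility_general A hA E hE ρAB hρ hp
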